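/- Let (A, μ, α) be a regular Hom-Novikov superalgebra (α an algebra automorphism). Define [x,y] = xy − (−1)^{|x||y|} yx and [x,y]_{α⁻¹} = α⁻¹([x,y]). Then (A, [·,·]_{α⁻¹}) is a Lie superalgebra. -/

import Mathlib

/-- The sub-adjacent super-commutator bracket `[x,y] = xy - (-1)^(|x||y|) yx`
for homogeneous `x` of degree `i` and `y` of degree `j`. -/
def sbr {𝕜 A : Type*} [Field 𝕜] [AddCommGroup A] [Module 𝕜 A]
    (mul : A →ₗ[𝕜] A →ₗ[𝕜] A) (i j : ZMod 2) (x y : A) : A :=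
  mul x y - ((-1 : 𝕜) ^ (i.val * j.val)) • mul y x

/-!
Write `ε(i,j) = (-1)^(ij)` and `[·,·]` for the super-commutator `sbr`. Since `β = α⁻¹` is again
multiplicative, `β [u, β w] = β² [α u, w]`, so the super Jacobi identity for `β [·,·]` is `β²`
applied to the Hom-Jacobi identity `∮ ε(|x|,|z|) [α x, [y, z]] = 0` of the commutator. Expanded
into products, the latter is the signed sum of the Hom-left-symmetry identities at `(x,y,z)`,
`(z,x,y)` and `(y,z,x)`.
-/

section

variable {𝕜 A : Type*} [Field 𝕜] [AddCommGroup A] [Module 𝕜 A]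

theorem neg_one_pow_val_mul_add (i j k : ZMod 2) :
    (-1 : 𝕜) ^ (i.val * (j + k).val) = (-1) ^ (i.val * j.val) * (-1) ^ (i.val * k.val) := by
  rw [← pow_add, ← mul_add, neg_one_pow_eq_pow_mod_two, ZMod.val_add, Nat.mul_mod_mod,
    ← neg_one_pow_eq_pow_mod_two]

theorem sbr_eq_neg_smul_sbr (mul : A →ₗ[𝕜] A →ₗ[𝕜] A) (i j : ZMod 2) (x y : A) :
    sbr mul i j x y = -(((-1 : 𝕜) ^ (i.val * j.val)) • sbr mul j i y x) := by
  have hsign : (-1 : 𝕜) ^ (i.val * j.val) * (-1) ^ (j.val * i.val) = 1 := by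
    rw [Nat.mul_comm j.val, ← pow_add, ← two_mul, pow_mul, neg_one_sq, one_pow]
  rw [sbr, sbr, smul_sub, smul_smul, hsign, one_smul, neg_sub]

theorem map_mul_of_inverse {mul : A →ₗ[𝕜] A →ₗ[𝕜] A} {α β : A →ₗ[𝕜] A}
    (hα_mul : ∀ x y : A, α (mul x y) = mul (α x) (α y))
    (hβα : ∀ x : A, β (α x) = x) (hαβ : ∀ x : A, α (β x) = x) (a b : A) :
    β (mul a b) = mul (β a) (β b) := by
  conv_lhs => rw [← hαβ a, ← hαβ b, ← hα_mul, hβα]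

theorem sbr_map_right {mul : A →ₗ[𝕜] A →ₗ[𝕜] A} {α β : A →ₗ[𝕜] A}
    (hβ_mul : ∀ x y : A, β (mul x y) = mul (β x) (β y)) (hβα : ∀ x : A, β (α x) = x)
    (i j : ZMod 2) (u w : A) :
    sbr mul i j u (β w) = β (sbr mul i j (α u) w) := by
  simp only [sbr, map_sub, map_smul, hβ_mul, hβα]

def IsHomLeftSymmetric (G : ZMod 2 → Submodule 𝕜 A) (mul : A →ₗ[𝕜] A →ₗ[𝕜] A)
    (α : A →ₗ[𝕜] A) : Prop :=
  ∀ i j k : ZMod 2, ∀ x ∈ G i, ∀ y ∈ G j, ∀ z ∈ G k,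
    mul (mul x y) (α z) - mul (α x) (mul y z)
      = ((-1 : 𝕜) ^ (i.val * j.val)) • (mul (mul y x) (α z) - mul (α y) (mul x z))

theorem IsHomLeftSymmetric.homJacobi_sbr {G : ZMod 2 → Submodule 𝕜 A}
    {mul : A →ₗ[𝕜] A →ₗ[𝕜] A} {α : A →ₗ[𝕜] A} (h : IsHomLeftSymmetric G mul α)
    {i j k : ZMod 2} {x y z : A} (hx : x ∈ G i) (hy : y ∈ G j) (hz : z ∈ G k) :
    ((-1 : 𝕜) ^ (i.val * k.val)) • sbr mul i (j + k) (α x) (sbr mul j k y z)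
      + ((-1 : 𝕜) ^ (i.val * j.val)) • sbr mul j (k + i) (α y) (sbr mul k i z x)
      + ((-1 : 𝕜) ^ (j.val * k.val)) • sbr mul k (i + j) (α z) (sbr mul i j x y) = 0 := by
  have hxyz := h i j k x hx y hy z hz
  have hzxy := h k i j z hz x hx y hy
  have hyzx := h j k i y hy z hz x hx
  linear_combination (norm := skip) (-((-1 : 𝕜) ^ (i.val * k.val))) • hxyz
    - ((-1 : 𝕜) ^ (j.val * k.val)) • hzxy - ((-1 : 𝕜) ^ (i.val * j.val)) • hyzx
  simp only [sbr, map_sub, map_smul, LinearMap.sub_apply, LinearMap.smul_apply,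
    neg_one_pow_val_mul_add]
  -- the remaining sign bookkeeping uses `ε(i,j)² = 1`, settled degree by degree
  fin_cases i <;> fin_cases j <;> fin_cases k <;> norm_num [ZMod.val] <;> module

end

theorem stmt1_general
    (𝕜 A : Type*) [Field 𝕜] [AddCommGroup A] [Module 𝕜 A]
    (G : ZMod 2 → Submodule 𝕜 A)
    (mul : A →ₗ[𝕜] A →ₗ[𝕜] A) (α : A →ₗ[𝕜] A)
    (hα_mul : ∀ x y : A, α (mul x y) = mul (α x) (α y))
    (hls : ∀ i j k : ZMod 2, ∀ x ∈ G i, ∀ y ∈ G j, ∀ z ∈ G k,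
      mul (mul x y) (α z) - mul (α x) (mul y z)
        = ((-1 : 𝕜) ^ (i.val * j.val)) • (mul (mul y x) (α z) - mul (α y) (mul x z)))
    (β : A →ₗ[𝕜] A) (hβα : ∀ x : A, β (α x) = x) (hαβ : ∀ x : A, α (β x) = x) :
    (∀ i j : ZMod 2, ∀ x ∈ G i, ∀ y ∈ G j,
      β (sbr mul i j x y) = -(((-1 : 𝕜) ^ (i.val * j.val)) • β (sbr mul j i y x))) ∧
    (∀ i j k : ZMod 2, ∀ x ∈ G i, ∀ y ∈ G j, ∀ z ∈ G k,
      ((-1 : 𝕜) ^ (i.val * k.val)) • β (sbr mul i (j + k) x (β (sbr mul j k y z)))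
        + ((-1 : 𝕜) ^ (i.val * j.val)) • β (sbr mul j (k + i) y (β (sbr mul k i z x)))
        + ((-1 : 𝕜) ^ (j.val * k.val)) • β (sbr mul k (i + j) z (β (sbr mul i j x y))) = 0) := by
  have hls : IsHomLeftSymmetric G mul α := hls
  have hβ_mul := map_mul_of_inverse hα_mul hβα hαβ
  refine ⟨fun i j x _ y _ => by rw [sbr_eq_neg_smul_sbr, map_neg, map_smul],
    fun i j k x hx y hy z hz => ?_⟩
  simp only [sbr_map_right hβ_mul hβα, ← map_smul, ← map_add]
  rw [hls.homJacobi_sbr hx hy hz, map_zero, map_zero]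

theorem stmt1
    (𝕜 A : Type*) [Field 𝕜] [AddCommGroup A] [Module 𝕜 A]
    (G : ZMod 2 → Submodule 𝕜 A) (hG : DirectSum.IsInternal G)
    (mul : A →ₗ[𝕜] A →ₗ[𝕜] A) (α : A →ₗ[𝕜] A)
    (hmul_even : ∀ i j : ZMod 2, ∀ x ∈ G i, ∀ y ∈ G j, mul x y ∈ G (i + j))
    (hα_even : ∀ i : ZMod 2, ∀ x ∈ G i, α x ∈ G i)
    (hα_mul : ∀ x y : A, α (mul x y) = mul (α x) (α y))
    (hls : ∀ i j k : ZMod 2, ∀ x ∈ G i, ∀ y ∈ G j, ∀ z ∈ G k,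
      mul (mul x y) (α z) - mul (α x) (mul y z)
        = ((-1 : 𝕜) ^ (i.val * j.val)) • (mul (mul y x) (α z) - mul (α y) (mul x z)))
    (hrn : ∀ i j k : ZMod 2, ∀ x ∈ G i, ∀ y ∈ G j, ∀ z ∈ G k,
      mul (mul x y) (α z) = ((-1 : 𝕜) ^ (j.val * k.val)) • mul (mul x z) (α y))
    (β : A →ₗ[𝕜] A) (hβα : ∀ x : A, β (α x) = x) (hαβ : ∀ x : A, α (β x) = x) :
    (∀ i j : ZMod 2, ∀ x ∈ G i, ∀ y ∈ G j,
      β (sbr mul i j x y) = -(((-1 : 𝕜) ^ (i.val * j.val)) • β (sbr mul j i y x))) ∧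
    (∀ i j k : ZMod 2, ∀ x ∈ G i, ∀ y ∈ G j, ∀ z ∈ G k,
      ((-1 : 𝕜) ^ (i.val * k.val)) • β (sbr mul i (j + k) x (β (sbr mul j k y z)))
        + ((-1 : 𝕜) ^ (i.val * j.val)) • β (sbr mul j (k + i) y (β (sbr mul k i z x)))
        + ((-1 : 𝕜) ^ (j.val * k.val)) • β (sbr mul k (i + j) z (β (sbr mul i j x y))) = 0) :=
  stmt1_general 𝕜 A G mul α hα_mul hls β hβα hαβ
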